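/- There exists a constant C > 0 depending only on α and A₀ such that the following holds. Let h : ℕ → [0,∞) be a nonnegative multiplicative function belonging to C_w(α). Then for every x ≥ 16, ∑_{n≤x} h(n) ≤ C (x/log x)(log log x) ∑_{n≤x} h(n)/n + C (x/log x)(log log x)^α. -/

import Mathlib

/-!
Comparing coefficients in `-F' = F · ∑ a_h(n) Λ(n) n^{-s}` gives
`h(n) log n = ∑_{de = n} h(d) a_h(e) Λ(e)`. On each window `(x, ex]`, Cauchy–Schwarz and
Chebyshev's bound `ψ(y) ≪ y` turn the `C_w(α)` condition into `∑_{x<e≤ex} |a_h(e)| Λ(e) ≪ x`,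
and summing over the windows `(y/e^{k+1}, y/e^k]` gives `∑_{e ≤ y} |a_h(e)| Λ(e) ≪ y`. Hence
`∑_{n≤x} h(n) log n ≪ x ∑_{n≤x} h(n)/n`, and splitting `n ≤ √x` from `n > √x` yields
`∑_{n≤x} h(n) ≪ (x / log x) ∑_{n≤x} h(n)/n`, which is stronger than the claim because
`log log x ≥ 1` for `x ≥ 16`.
-/

open Complex Finset MeasureTheory

/-- The von Mangoldt function. -/
noncomputable def vM (n : ℕ) : ℝ := ArithmeticFunction.vonMangoldt n

/-- A multiplicative function `f : ℕ → ℂ` whose Dirichlet series `F(s) = ∑ f(n) n^{-s}`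
converges absolutely for `Re(s) > 1`, together with the coefficients `a = a_f`, supported on
prime powers, determined by `-F'(s)/F(s) = ∑ a_f(n) Λ(n) n^{-s}` for `Re(s) > 1`. -/
structure MultData where
  f : ℕ → ℂ
  a : ℕ → ℂ
  f_one : f 1 = 1
  f_mul : ∀ m n : ℕ, Nat.Coprime m n → f (m * n) = f m * f n
  abs_conv : ∀ s : ℂ, 1 < s.re → Summable fun n : ℕ => ‖f n / (n : ℂ) ^ s‖
  a_supp : ∀ n : ℕ, ¬ IsPrimePow n → a n = 0
  a_summable : ∀ s : ℂ, 1 < s.re → Summable fun n : ℕ => a n * (vM n : ℂ) / (n : ℂ) ^ s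
  log_deriv : ∀ s : ℂ, 1 < s.re →
    deriv (fun z : ℂ => ∑' n : ℕ, f n / (n : ℂ) ^ z) s
      = -((∑' n : ℕ, f n / (n : ℂ) ^ s) * ∑' n : ℕ, a n * (vM n : ℂ) / (n : ℂ) ^ s)

/-- Membership in the class `C_w(κ)` (with constant `A₀`):
`∑_{x < n ≤ ex} |a_f(n)|² Λ(n)/n ≤ κ² + A₀ / log(ex)` for every `x ≥ 1`. -/
def MemCw (κ A₀ : ℝ) (D : MultData) : Prop :=
  ∀ x : ℝ, 1 ≤ x →
    ∑ n ∈ Finset.Ioc ⌊x⌋₊ ⌊Real.exp 1 * x⌋₊, ‖D.a n‖ ^ 2 * vM n / n ≤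
      κ ^ 2 + A₀ / Real.log (Real.exp 1 * x)

open ArithmeticFunction LSeries
open scoped LSeries.notation

theorem sq_sum_mul_vonMangoldt_le (u : ℕ → ℝ) (M N : ℕ) :
    (∑ n ∈ Ioc M N, u n * Λ n) ^ 2 ≤
      (∑ n ∈ Ioc M N, u n ^ 2 * Λ n / n) * ((Real.log 4 + 4) * N ^ 2) := by
  have hψ : ∑ n ∈ Ioc M N, (n : ℝ) * Λ n ≤ (Real.log 4 + 4) * N ^ 2 :=
    calc ∑ n ∈ Ioc M N, (n : ℝ) * Λ n ≤ ∑ n ∈ Ioc 0 N, (N : ℝ) * Λ n := by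
          refine sum_le_sum_of_subset_of_nonneg (Ioc_subset_Ioc_left (Nat.zero_le M))
            (fun n _ _ => mul_nonneg (Nat.cast_nonneg N) vonMangoldt_nonneg) |>.trans' ?_
          refine sum_le_sum fun n hn => ?_
          gcongr
          exact (mem_Ioc.1 hn).2
      _ = N * Chebyshev.psi N := by rw [Chebyshev.psi, Nat.floor_natCast, mul_sum]
      _ ≤ N * ((Real.log 4 + 4) * N) := by
          gcongr; exact Chebyshev.psi_le_const_mul_self (Nat.cast_nonneg N)
      _ = (Real.log 4 + 4) * N ^ 2 := by ring
  refine (sum_sq_le_sum_mul_sum_of_sq_le_mul _ (fun n _ => by positivity) (fun n _ => by positivity)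
    fun n hn => le_of_eq ?_).trans
    (mul_le_mul_of_nonneg_left hψ (sum_nonneg fun n _ => by positivity))
  have hn0 : (n : ℝ) ≠ 0 := Nat.cast_ne_zero.2 (by grind)
  field_simp

theorem sum_window_mul_vonMangoldt_le {u : ℕ → ℝ} {β : ℝ}
    (hβ : ∀ x : ℝ, 1 ≤ x → ∑ n ∈ Ioc ⌊x⌋₊ ⌊Real.exp 1 * x⌋₊, u n ^ 2 * Λ n / n ≤ β)
    {x : ℝ} (hx : 1 ≤ x) :
    ∑ n ∈ Ioc ⌊x⌋₊ ⌊Real.exp 1 * x⌋₊, u n * Λ n ≤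
      √(β * (Real.log 4 + 4)) * ⌊Real.exp 1 * x⌋₊ := by
  set N := ⌊Real.exp 1 * x⌋₊
  have hsq : (∑ n ∈ Ioc ⌊x⌋₊ N, u n * Λ n) ^ 2 ≤ β * (Real.log 4 + 4) * N ^ 2 := by
    refine (sq_sum_mul_vonMangoldt_le u ⌊x⌋₊ N).trans ?_
    rw [mul_assoc]
    exact mul_le_mul_of_nonneg_right (hβ x hx) (by positivity)
  calc ∑ n ∈ Ioc ⌊x⌋₊ N, u n * Λ n ≤ |∑ n ∈ Ioc ⌊x⌋₊ N, u n * Λ n| := le_abs_self _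
    _ ≤ √(β * (Real.log 4 + 4) * N ^ 2) := Real.abs_le_sqrt hsq
    _ = √(β * (Real.log 4 + 4)) * N := by
        rw [Real.sqrt_mul' _ (by positivity), Real.sqrt_sq (Nat.cast_nonneg N)]

theorem natFloor_exp_one_eq_two : ⌊Real.exp 1⌋₊ = 2 := by
  rw [Nat.floor_eq_iff (Real.exp_pos 1).le]
  have := Real.exp_one_gt_d9
  have := Real.exp_one_lt_d9
  constructor <;> norm_num <;> linarith

theorem sum_mul_vonMangoldt_le_of_window {u : ℕ → ℝ} {β : ℝ}
    (hβ : ∀ x : ℝ, 1 ≤ x → ∑ n ∈ Ioc ⌊x⌋₊ ⌊Real.exp 1 * x⌋₊, u n ^ 2 * Λ n / n ≤ β) (N : ℕ) :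
    ∑ n ∈ Ioc 0 N, u n * Λ n ≤ 2 * √(β * (Real.log 4 + 4)) * N := by
  have hB : 0 ≤ √(β * (Real.log 4 + 4)) := Real.sqrt_nonneg _
  induction N using Nat.strong_induction_on with
  | _ N ih =>
  rcases lt_or_ge N 3 with hN | hN
  -- for `N ≤ 2` the only possibly nonzero term is `n = 2`, which lies in the window `(1, e]`
  · have h₁ := sum_window_mul_vonMangoldt_le hβ le_rfl
    rw [Nat.floor_one, mul_one, natFloor_exp_one_eq_two] at h₁
    interval_cases N
    · simp
    · simp [hB]
    · rw [← sum_Ioc_consecutive _ (Nat.zero_le 1) one_le_two]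
      simp only [Nat.Ioc_succ_singleton, sum_singleton, vonMangoldt_apply_one, mul_zero, zero_add]
      push_cast at h₁ ⊢
      linarith
  · set x := (N : ℝ) / Real.exp 1
    have he := Real.exp_one_gt_d9
    have hex : Real.exp 1 * x = N := by simp only [x]; field_simp
    have hx : 1 ≤ x := by
      rw [le_div_iff₀ (Real.exp_pos 1), one_mul]
      have : (3 : ℝ) ≤ N := by exact_mod_cast hN
      linarith [Real.exp_one_lt_d9]
    have hM : 2 * (⌊x⌋₊ : ℝ) ≤ N := by
      have : 2 * x ≤ N := by
        rw [← hex]; gcongr; linarith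
      linarith [Nat.floor_le (zero_le_one.trans hx)]
    have hMN : ⌊x⌋₊ < N := by
      have : (⌊x⌋₊ : ℝ) < N := by linarith [(Nat.cast_pos (α := ℝ)).2 (by omega : 0 < N)]
      exact_mod_cast this
    have hwindow := sum_window_mul_vonMangoldt_le hβ hx
    rw [hex, Nat.floor_natCast] at hwindow
    rw [← sum_Ioc_consecutive _ (Nat.zero_le _) hMN.le]
    linarith [ih _ hMN, mul_le_mul_of_nonneg_left hM hB]

theorem MemCw.sum_window_le {α A₀ : ℝ} {D : MultData} (hD : MemCw α A₀ D) {x : ℝ} (hx : 1 ≤ x) :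
    ∑ n ∈ Ioc ⌊x⌋₊ ⌊Real.exp 1 * x⌋₊, ‖D.a n‖ ^ 2 * Λ n / n ≤ α ^ 2 + |A₀| := by
  have hlog : 1 ≤ Real.log (Real.exp 1 * x) := by
    rw [Real.log_mul (Real.exp_pos 1).ne' (by linarith), Real.log_exp]
    linarith [Real.log_nonneg hx]
  calc _ ≤ α ^ 2 + A₀ / Real.log (Real.exp 1 * x) := hD x hx
    _ ≤ α ^ 2 + |A₀| / Real.log (Real.exp 1 * x) := by gcongr; exact le_abs_self A₀
    _ ≤ α ^ 2 + |A₀| := by gcongr; exact div_le_self (abs_nonneg A₀) hlog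

theorem sum_Ioc_convolution_eq_sum_sum {R : Type*} [Semiring R] (f g : ℕ → R) (N : ℕ) :
    ∑ n ∈ Ioc 0 N, (f ⍟ g) n = ∑ d ∈ Ioc 0 N, f d * ∑ e ∈ Ioc 0 (N / d), g e := by
  rw [LSeries.convolution, sum_Ioc_mul_eq_sum_sum]
  refine sum_congr rfl fun d hd => ?_
  simp only [toArithmeticFunction, ArithmeticFunction.coe_mk, if_neg (mem_Ioc.1 hd).1.ne']
  congr 1
  exact sum_congr rfl fun e he => if_neg (mem_Ioc.1 he).1.ne'

theorem sum_mul_log_le_of_le_convolution {h g : ℕ → ℝ} (hh : ∀ n, 0 ≤ h n) {K : ℝ} (hK : 0 ≤ K)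
    (hg : ∀ N : ℕ, ∑ n ∈ Ioc 0 N, g n ≤ K * N) (hhg : ∀ n, h n * Real.log n ≤ (h ⍟ g) n)
    {x : ℝ} (hx : 0 ≤ x) :
    ∑ n ∈ Ioc 0 ⌊x⌋₊, h n * Real.log n ≤ K * x * ∑ n ∈ Ioc 0 ⌊x⌋₊, h n / n := by
  calc ∑ n ∈ Ioc 0 ⌊x⌋₊, h n * Real.log n ≤ ∑ n ∈ Ioc 0 ⌊x⌋₊, (h ⍟ g) n :=
        sum_le_sum fun n _ => hhg n
    _ = ∑ d ∈ Ioc 0 ⌊x⌋₊, h d * ∑ e ∈ Ioc 0 (⌊x⌋₊ / d), g e := sum_Ioc_convolution_eq_sum_sum h g _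
    _ ≤ ∑ d ∈ Ioc 0 ⌊x⌋₊, h d * (K * (x / d)) := by
        refine sum_le_sum fun d _ => mul_le_mul_of_nonneg_left ((hg _).trans ?_) (hh d)
        gcongr
        exact Nat.cast_div_le.trans (by gcongr; exact Nat.floor_le hx)
    _ = K * x * ∑ n ∈ Ioc 0 ⌊x⌋₊, h n / n := by
        rw [mul_sum]
        exact sum_congr rfl fun d _ => by ring

theorem sum_le_sqrt_mul_sum_div_add_sum_mul_log {h : ℕ → ℝ} (hh : ∀ n, 0 ≤ h n) {x : ℝ}
    (hx : 1 < x) (N : ℕ) :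
    ∑ n ∈ Ioc 0 N, h n ≤
      √x * ∑ n ∈ Ioc 0 N, h n / n + 2 / Real.log x * ∑ n ∈ Ioc 0 N, h n * Real.log n := by
  rw [mul_sum, mul_sum, ← sum_add_distrib]
  refine sum_le_sum fun n hn => ?_
  have hn1 : (1 : ℝ) ≤ n := Nat.one_le_cast.2 (mem_Ioc.1 hn).1
  have hlogx : 0 < Real.log x := Real.log_pos hx
  have hlogn : 0 ≤ Real.log n := Real.log_nonneg hn1
  have hhn := hh n
  rcases le_or_gt (n : ℝ) √x with hle | hlt
  · have : h n ≤ √x * (h n / n) := by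
      rw [mul_div_assoc', le_div_iff₀ (by linarith)]
      nlinarith
    have : 0 ≤ 2 / Real.log x * (h n * Real.log n) := by positivity
    linarith
  · have hlog : Real.log x ≤ 2 * Real.log n := by
      have := Real.log_lt_log (Real.sqrt_pos.2 (by linarith)) hlt
      rw [Real.log_sqrt (by linarith)] at this
      linarith
    have : h n ≤ 2 / Real.log x * (h n * Real.log n) := by
      rw [div_mul_eq_mul_div, le_div_iff₀ hlogx]
      nlinarith
    have : 0 ≤ √x * (h n / n) := by positivity
    linarith

theorem sqrt_le_two_mul_div_log {x : ℝ} (hx : 1 < x) : √x ≤ 2 * (x / Real.log x) := by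
  have hs : 0 < √x := Real.sqrt_pos.2 (by linarith)
  have hlog : Real.log x ≤ 2 * √x := by
    have := Real.log_le_sub_one_of_pos hs
    rw [Real.log_sqrt (by linarith)] at this
    linarith
  rw [mul_div_assoc', le_div_iff₀ (Real.log_pos hx)]
  nlinarith [Real.mul_self_sqrt (by linarith : 0 ≤ x)]

theorem sum_le_mul_div_log_mul_sum_div {h g : ℕ → ℝ} (hh : ∀ n, 0 ≤ h n) {K : ℝ} (hK : 0 ≤ K)
    (hg : ∀ N : ℕ, ∑ n ∈ Ioc 0 N, g n ≤ K * N) (hhg : ∀ n, h n * Real.log n ≤ (h ⍟ g) n)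
    {x : ℝ} (hx : 1 < x) :
    ∑ n ∈ Ioc 0 ⌊x⌋₊, h n ≤ (2 + 2 * K) * (x / Real.log x) * ∑ n ∈ Ioc 0 ⌊x⌋₊, h n / n := by
  have hlogx := Real.log_pos hx
  have hsum : 0 ≤ ∑ n ∈ Ioc 0 ⌊x⌋₊, h n / n := sum_nonneg fun n _ => div_nonneg (hh n) n.cast_nonneg
  calc ∑ n ∈ Ioc 0 ⌊x⌋₊, h n
      ≤ √x * ∑ n ∈ Ioc 0 ⌊x⌋₊, h n / n
          + 2 / Real.log x * ∑ n ∈ Ioc 0 ⌊x⌋₊, h n * Real.log n :=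
        sum_le_sqrt_mul_sum_div_add_sum_mul_log hh hx _
    _ ≤ 2 * (x / Real.log x) * ∑ n ∈ Ioc 0 ⌊x⌋₊, h n / n
          + 2 / Real.log x * (K * x * ∑ n ∈ Ioc 0 ⌊x⌋₊, h n / n) := by
        gcongr
        · exact sqrt_le_two_mul_div_log hx
        · exact sum_mul_log_le_of_le_convolution hh hK hg hhg (by linarith)
    _ = (2 + 2 * K) * (x / Real.log x) * ∑ n ∈ Ioc 0 ⌊x⌋₊, h n / n := by ring

theorem LSeries_eq_tsum_div_cpow (f : ℕ → ℂ) {s : ℂ} (hs : s ≠ 0) :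
    LSeries f s = ∑' n : ℕ, f n / (n : ℂ) ^ s := by
  simp only [LSeries, term_of_ne_zero' hs]

theorem LSeriesSummable_iff_summable_div_cpow (f : ℕ → ℂ) {s : ℂ} (hs : s ≠ 0) :
    LSeriesSummable f s ↔ Summable fun n : ℕ => f n / (n : ℂ) ^ s := by
  rw [LSeriesSummable, funext (term_of_ne_zero' hs f)]

namespace MultData

variable (D : MultData)

noncomputable def logDerivCoeff (n : ℕ) : ℂ := D.a n * vM n

theorem LSeriesSummable_f {s : ℂ} (hs : 1 < s.re) : LSeriesSummable D.f s :=
  (LSeriesSummable_iff_summable_div_cpow _ (ne_zero_of_one_lt_re hs)).2 (D.abs_conv s hs).of_norm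

theorem LSeriesSummable_logDerivCoeff {s : ℂ} (hs : 1 < s.re) :
    LSeriesSummable D.logDerivCoeff s :=
  (LSeriesSummable_iff_summable_div_cpow _ (ne_zero_of_one_lt_re hs)).2 (D.a_summable s hs)

theorem abscissaOfAbsConv_f_le : abscissaOfAbsConv D.f ≤ 1 :=
  abscissaOfAbsConv_le_of_forall_lt_LSeriesSummable' fun _ hy =>
    D.LSeriesSummable_f (by rw [Complex.ofReal_re]; exact_mod_cast hy)

theorem abscissaOfAbsConv_logDerivCoeff_le : abscissaOfAbsConv D.logDerivCoeff ≤ 1 :=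
  abscissaOfAbsConv_le_of_forall_lt_LSeriesSummable' fun _ hy =>
    D.LSeriesSummable_logDerivCoeff (by rw [Complex.ofReal_re]; exact_mod_cast hy)

theorem LSeries_logMul_f {s : ℂ} (hs : 1 < s.re) :
    LSeries (logMul D.f) s = LSeries (D.f ⍟ D.logDerivCoeff) s := by
  have hF : LSeries D.f =ᶠ[nhds s] fun z => ∑' n : ℕ, D.f n / (n : ℂ) ^ z := by
    filter_upwards [isOpen_ne.mem_nhds (ne_zero_of_one_lt_re hs)] with z hz
    exact LSeries_eq_tsum_div_cpow _ hz
  have hderiv := LSeries_deriv (D.abscissaOfAbsConv_f_le.trans_lt (by exact_mod_cast hs))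
  rw [hF.deriv_eq, D.log_deriv s hs, neg_inj] at hderiv
  rw [← hderiv, LSeries_convolution' (D.LSeriesSummable_f hs) (D.LSeriesSummable_logDerivCoeff hs),
    LSeries_eq_tsum_div_cpow _ (ne_zero_of_one_lt_re hs),
    LSeries_eq_tsum_div_cpow _ (ne_zero_of_one_lt_re hs)]
  rfl

theorem logMul_f_eq_convolution {n : ℕ} (hn : n ≠ 0) :
    logMul D.f n = (D.f ⍟ D.logDerivCoeff) n := by
  refine LSeries.eq_of_LSeries_eventually_eq ?_ ?_ ?_ hn
  · rw [LSeries.abscissaOfAbsConv_logMul]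
    exact D.abscissaOfAbsConv_f_le.trans_lt (EReal.coe_lt_top 1)
  · exact (abscissaOfAbsConv_convolution_le _ _).trans_lt <|
      max_lt (D.abscissaOfAbsConv_f_le.trans_lt (EReal.coe_lt_top 1))
        (D.abscissaOfAbsConv_logDerivCoeff_le.trans_lt (EReal.coe_lt_top 1))
  · filter_upwards [Filter.eventually_gt_atTop 1] with x hx
    exact D.LSeries_logMul_f (by simpa using hx)

theorem norm_f_mul_log_le (n : ℕ) :
    ‖D.f n‖ * Real.log n ≤ ((fun n => ‖D.f n‖) ⍟ fun n => ‖D.a n‖ * Λ n) n := by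
  rcases eq_or_ne n 0 with rfl | hn
  · simp
  have hlog : ‖D.f n‖ * Real.log n = ‖logMul D.f n‖ := by
    rw [logMul, norm_mul, ← Complex.ofReal_natCast, ← Complex.ofReal_log (Nat.cast_nonneg n),
      Complex.norm_real, Real.norm_of_nonneg (Real.log_natCast_nonneg n), mul_comm]
  rw [hlog, D.logMul_f_eq_convolution hn, LSeries.convolution_def, LSeries.convolution_def]
  refine (norm_sum_le _ _).trans_eq (sum_congr rfl fun p _ => ?_)
  rw [logDerivCoeff, norm_mul, norm_mul, vM, Complex.norm_real,
    Real.norm_of_nonneg vonMangoldt_nonneg]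

theorem sum_norm_f_le {α A₀ : ℝ} (hD : MemCw α A₀ D) {x : ℝ} (hx : 1 < x) :
    ∑ n ∈ Ioc 0 ⌊x⌋₊, ‖D.f n‖ ≤
      (2 + 4 * √((α ^ 2 + |A₀|) * (Real.log 4 + 4))) * (x / Real.log x) *
        ∑ n ∈ Ioc 0 ⌊x⌋₊, ‖D.f n‖ / n := by
  have := sum_le_mul_div_log_mul_sum_div (fun n => norm_nonneg (D.f n)) (by positivity)
    (sum_mul_vonMangoldt_le_of_window fun _ hy => hD.sum_window_le hy) D.norm_f_mul_log_le hx
  rwa [← mul_assoc, show (2 : ℝ) * 2 = 4 by norm_num] at this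

end MultData

theorem one_le_log_log {x : ℝ} (hx : 16 ≤ x) : 1 ≤ Real.log (Real.log x) := by
  have h16 : Real.log 16 = 4 * Real.log 2 := by
    rw [show (16 : ℝ) = 2 ^ 4 by norm_num, Real.log_pow]
    norm_num
  rw [Real.le_log_iff_exp_le (Real.log_pos (by linarith))]
  linarith [Real.log_le_log (by norm_num) hx, Real.log_two_gt_d9, Real.exp_one_lt_d9]

theorem stmt18_general (α A₀ : ℝ) :
    ∃ C : ℝ, 0 < C ∧ ∀ D : MultData, MemCw α A₀ D →
      (∀ n : ℕ, 0 ≤ (D.f n).re ∧ (D.f n).im = 0) → ∀ x : ℝ, 16 ≤ x →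
      ∑ n ∈ Finset.Icc 1 ⌊x⌋₊, (D.f n).re ≤
        C * (x / Real.log x) * Real.log (Real.log x) *
            ∑ n ∈ Finset.Icc 1 ⌊x⌋₊, (D.f n).re / n
          + C * (x / Real.log x) * Real.log (Real.log x) ^ α := by
  set C := 2 + 4 * √((α ^ 2 + |A₀|) * (Real.log 4 + 4))
  refine ⟨C, by positivity, fun D hD hf x hx => ?_⟩
  have hre : ∀ n, (D.f n).re = ‖D.f n‖ := fun n =>
    Complex.re_eq_norm.2 ⟨(hf n).1, (hf n).2.symm⟩
  have hIcc : Icc 1 ⌊x⌋₊ = Ioc 0 ⌊x⌋₊ := Icc_add_one_left_eq_Ioc 0 _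
  simp only [hre, hIcc]
  have hloglog := one_le_log_log hx
  have hC : 0 ≤ C * (x / Real.log x) := by
    have := Real.log_pos (by linarith : (1 : ℝ) < x)
    positivity
  calc _ ≤ C * (x / Real.log x) * ∑ n ∈ Ioc 0 ⌊x⌋₊, ‖D.f n‖ / n :=
        D.sum_norm_f_le hD (by linarith)
    _ ≤ C * (x / Real.log x) * Real.log (Real.log x) * ∑ n ∈ Ioc 0 ⌊x⌋₊, ‖D.f n‖ / n :=
        mul_le_mul_of_nonneg_right (le_mul_of_one_le_right hC hloglog)
          (sum_nonneg fun n _ => by positivity)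
    _ ≤ _ := le_add_of_nonneg_right <|
        mul_nonneg hC (Real.rpow_nonneg (zero_le_one.trans hloglog) α)

/-- For a nonnegative multiplicative `h ∈ C_w(α)` and `x ≥ 16`:
`∑_{n≤x} h(n) ≤ C (x/log x)(log log x) ∑_{n≤x} h(n)/n + C (x/log x)(log log x)^α`. -/
theorem stmt18 (α A₀ : ℝ) (hα : 1 ≤ α) (hA : 1 ≤ A₀) :
    ∃ C : ℝ, 0 < C ∧ ∀ D : MultData, MemCw α A₀ D →
      (∀ n : ℕ, 0 ≤ (D.f n).re ∧ (D.f n).im = 0) → ∀ x : ℝ, 16 ≤ x →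
      ∑ n ∈ Finset.Icc 1 ⌊x⌋₊, (D.f n).re ≤
        C * (x / Real.log x) * Real.log (Real.log x) *
            ∑ n ∈ Finset.Icc 1 ⌊x⌋₊, (D.f n).re / n
          + C * (x / Real.log x) * Real.log (Real.log x) ^ α :=
  stmt18_general α A₀
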